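/- Let p and q be coprime positive integers and let n be an integer with 0 < n < pq. Then the integer |L(n)| − |L(pq+n)| (the difference of the cardinalities of L(n) and L(pq+n)) equals: 0 if n is divisible by p or by q; +1 if n is divisible by neither p nor q and L(n) is nonempty; and −1 if n is divisible by neither p nor q and L(n) is empty. (This is the jump function j_{p,q}(n/pq) of the (p,q) torus knot.) -/
import Mathlib


open scoped Classical

/-- For coprime positive integers `p` and `q` and an integer `m`, `L p q m` is the set of
pairs `(i, j)` of integers with `0 ≤ i ≤ p`, `0 ≤ j ≤ q` and `iq + jp = m`. -/
def L (p q m : ℤ) : Set (ℤ × ℤ) :=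
  {ij | 0 ≤ ij.1 ∧ ij.1 ≤ p ∧ 0 ≤ ij.2 ∧ ij.2 ≤ q ∧ ij.1 * q + ij.2 * p = m}

lemma ncard_ss {α : Type*} (S : Set α) (h : S.Subsingleton) :
    (S.ncard : ℤ) = if S.Nonempty then 1 else 0 := by
  by_cases hne : S.Nonempty
  · obtain ⟨a, ha⟩ := hne
    have hS : S = {a} := h.eq_singleton_of_mem ha
    rw [if_pos ⟨a, ha⟩, hS, Set.ncard_singleton]; rfl
  · rw [Set.not_nonempty_iff_eq_empty] at hne
    simp [hne]

lemma L_subsingleton (p q m : ℤ) (hp : 0 < p) (hq : 0 < q) (hpq : IsCoprime p q)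
    (hm : m ≠ p * q) : (L p q m).Subsingleton := by
  rintro ⟨i, j⟩ ⟨hi0, hip, hj0, hjq, hij⟩ ⟨i', j'⟩ ⟨hi0', hip', hj0', hjq', hij'⟩
  simp only at *
  have h1 : (i - i') * q = (j' - j) * p := by linarith [hij, hij', sub_mul i i' q]
  have h1' : (i - i') * q = (j' - j) * p := by ring_nf; ring_nf at h1; linarith
  have hpd : p ∣ (i - i') := hpq.dvd_of_dvd_mul_right ⟨j' - j, by linarith [h1]⟩
  obtain ⟨k, hk⟩ := hpd
  have hk1 : k ≤ 1 := by nlinarith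
  have hk2 : -1 ≤ k := by nlinarith
  interval_cases k
  · -- k = -1 : i' = p, i = 0
    have hi : i = 0 := by omega
    have hi' : i' = p := by omega
    have h2 : (j' - j) * p = (-1) * q * p := by rw [← h1, hk]; ring
    have h3 : j' - j = -q := by
      have := mul_right_cancel₀ (ne_of_gt hp) h2; linarith
    have hj : j = q := by omega
    exfalso; apply hm; rw [← hij, hi, hj]; ring
  · have hi : i = i' := by omega
    have h2 : (j' - j) * p = 0 := by rw [← h1, hk]; ring
    have h3 : j' = j := by
      have := mul_eq_zero.1 h2
      rcases this with h | h
      · linarith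
      · exact absurd h (ne_of_gt hp)
    rw [hi, h3]
  · -- k = 1 : i = p, i' = 0
    have hi : i = p := by omega
    have hi' : i' = 0 := by omega
    have h2 : (j' - j) * p = 1 * q * p := by rw [← h1, hk]; ring
    have h3 : j' - j = q := by
      have := mul_right_cancel₀ (ne_of_gt hp) h2; linarith
    have hj : j = 0 := by omega
    exfalso; apply hm; rw [← hij, hi, hj]; ring

/-- The jump function of the `(p,q)` torus knot: for `0 < n < pq`, the difference
`|L(n)| − |L(pq+n)|` is `0` if `p ∣ n` or `q ∣ n`; `+1` if neither divides `n` and `L(n)`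
is nonempty; and `−1` if neither divides `n` and `L(n)` is empty. -/
theorem jump_function_formula
    (p q n : ℤ) (hp : 0 < p) (hq : 0 < q) (hpq : IsCoprime p q)
    (hn1 : 0 < n) (hn2 : n < p * q) :
    ((L p q n).ncard : ℤ) - ((L p q (p * q + n)).ncard : ℤ) =
      if p ∣ n ∨ q ∣ n then 0
      else if (L p q n).Nonempty then 1 else -1 := by
  have hss1 : (L p q n).Subsingleton := L_subsingleton p q n hp hq hpq (by linarith)
  have hss2 : (L p q (p * q + n)).Subsingleton :=
    L_subsingleton p q (p * q + n) hp hq hpq (by linarith)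
  rw [ncard_ss _ hss1, ncard_ss _ hss2]
  by_cases hdvd : p ∣ n ∨ q ∣ n
  · rw [if_pos hdvd]
    rcases hdvd with ⟨l, hl⟩ | ⟨k, hk⟩
    · -- n = p * l
      have hl0 : 0 < l := by nlinarith
      have hlq : l < q := by nlinarith
      have h1 : ((0 : ℤ), l) ∈ L p q n := by
        refine ⟨le_refl _, le_of_lt hp, le_of_lt hl0, le_of_lt hlq, ?_⟩
        simp [hl]; ring
      have h2 : ((p : ℤ), l) ∈ L p q (p * q + n) := by
        refine ⟨le_of_lt hp, le_refl _, le_of_lt hl0, le_of_lt hlq, ?_⟩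
        simp only; rw [hl]; ring
      rw [if_pos ⟨_, h1⟩, if_pos ⟨_, h2⟩]; ring
    · -- n = q * k
      have hk0 : 0 < k := by nlinarith
      have hkp : k < p := by nlinarith
      have h1 : ((k : ℤ), (0 : ℤ)) ∈ L p q n := by
        refine ⟨le_of_lt hk0, le_of_lt hkp, le_refl _, le_of_lt hq, ?_⟩
        simp only; rw [hk]; ring
      have h2 : ((k : ℤ), q) ∈ L p q (p * q + n) := by
        refine ⟨le_of_lt hk0, le_of_lt hkp, le_of_lt hq, le_refl _, ?_⟩
        simp only; rw [hk]; ring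
      rw [if_pos ⟨_, h1⟩, if_pos ⟨_, h2⟩]; ring
  · rw [if_neg hdvd]
    push_neg at hdvd
    obtain ⟨hnp, hnq⟩ := hdvd
    -- construct the canonical solution
    have hcop := hpq
    obtain ⟨u, v, huv⟩ := hpq
    set i := (n * v) % p with hi_def
    have hi0 : 0 ≤ i := Int.emod_nonneg _ (ne_of_gt hp)
    have hip : i < p := Int.emod_lt_of_pos _ hp
    have hieq : i = n * v - p * ((n * v) / p) := by rw [hi_def, Int.emod_def]
    have hd : p ∣ (n - i * q) := by
      refine ⟨n * u + ((n * v) / p) * q, ?_⟩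
      rw [hieq]
      have : u * p + v * q = 1 := huv
      nlinarith [this]
    set j := (n - i * q) / p with hj_def
    have hjp : j * p = n - i * q := by
      rw [hj_def, Int.ediv_mul_cancel hd]
    have heq : i * q + j * p = n := by rw [hjp]; ring
    -- i > 0 since p does not divide n
    have hi_pos : 0 < i := by
      rcases lt_or_eq_of_le hi0 with h | h
      · exact h
      · exfalso; apply hnp; refine ⟨j, ?_⟩; rw [← heq, ← h]; ring
    -- j < q
    have hjq : j < q := by nlinarith
    -- j > -q
    have hjlb : -q < j := by nlinarith
    -- j ≠ 0 since q does not divide n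
    by_cases hj0 : 0 ≤ j
    · -- L n nonempty, L (pq+n) empty
      have h1 : ((i : ℤ), j) ∈ L p q n :=
        ⟨hi0, le_of_lt hip, hj0, le_of_lt hjq, heq⟩
      have h2 : L p q (p * q + n) = ∅ := by
        rw [Set.eq_empty_iff_forall_notMem]
        rintro ⟨i', j'⟩ ⟨hi0', hip', hj0', hjq', hij'⟩
        simp only at hij'
        have h1' : (i' - i) * q = (q + j - j') * p := by nlinarith [heq, hij']
        have hpd : p ∣ (i' - i) := hcop.dvd_of_dvd_mul_right ⟨q + j - j', by linarith⟩
        obtain ⟨k, hk⟩ := hpd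
        have hk0 : k = 0 := by nlinarith
        rw [hk0, mul_zero] at hk
        have hii : i' = i := by omega
        have h2' : (q + j - j') * p = 0 := by rw [← h1', hk]; ring
        have h3 : j' = q + j := by
          rcases mul_eq_zero.1 h2' with h | h
          · linarith
          · exact absurd h (ne_of_gt hp)
        have hj00 : j = 0 := by omega
        apply hnq
        exact ⟨i, by rw [← heq, hj00]; ring⟩
      rw [if_pos ⟨_, h1⟩, if_neg (by rw [h2]; exact Set.not_nonempty_empty),
        if_pos ⟨_, h1⟩]
      ring
    · -- L n empty, L (pq+n) nonempty
      push_neg at hj0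
      have h1 : L p q n = ∅ := by
        rw [Set.eq_empty_iff_forall_notMem]
        rintro ⟨i', j'⟩ ⟨hi0', hip', hj0', hjq', hij'⟩
        simp only at hij'
        have h1' : (i' - i) * q = (j - j') * p := by nlinarith [heq, hij']
        have hpd : p ∣ (i' - i) := hcop.dvd_of_dvd_mul_right ⟨j - j', by linarith⟩
        obtain ⟨k, hk⟩ := hpd
        have hk0 : k = 0 := by nlinarith
        rw [hk0, mul_zero] at hk
        have hii : i' = i := by omega
        have h2' : (j - j') * p = 0 := by rw [← h1', hk]; ring
        have h3 : j' = j := by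
          rcases mul_eq_zero.1 h2' with h | h
          · linarith
          · exact absurd h (ne_of_gt hp)
        linarith [hj0', h3]
      have h2 : ((i : ℤ), j + q) ∈ L p q (p * q + n) := by
        refine ⟨hi0, le_of_lt hip, show (0:ℤ) ≤ j + q by linarith,
          show j + q ≤ q by linarith, show i * q + (j + q) * p = p * q + n by linarith [heq]⟩
      rw [if_neg (by rw [h1]; exact Set.not_nonempty_empty), if_pos ⟨_, h2⟩,
        if_neg (by rw [h1]; exact Set.not_nonempty_empty)]
      ring
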